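/- For every pivot (v, i) ∈ [1,m] × [1,n], there exists at most one minimal fixed-interval with pivot (v, i). -/

import Mathlib

/-- Ordered binary trees (possibly empty). -/
inductive BTree : Type
  | nil : BTree
  | node : BTree → BTree → BTree
  deriving DecidableEq

/-- The minimum value of a list of integers (with default `0` for the empty list). -/
noncomputable def minval (l : List ℤ) : ℤ := l.minimum.untopD 0

/-- The 0-based index of the leftmost occurrence of the minimum value. -/
noncomputable def minidx0 (l : List ℤ) : ℕ := l.idxOf (minval l)

theorem minidx0_lt_length {l : List ℤ} (h : l ≠ []) : minidx0 l < l.length := by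
  obtain ⟨a, ha⟩ := WithTop.ne_top_iff_exists.mp (List.minimum_ne_top_of_ne_nil h)
  have hmem : a ∈ l := List.minimum_mem ha.symm
  have hval : minval l = a := by simp [minval, ← ha]
  rw [minidx0, hval]
  exact List.idxOf_lt_length_iff.mpr hmem

/-- The Cartesian tree of a string of integers. -/
noncomputable def CT (l : List ℤ) : BTree :=
  if h : l = [] then .nil
  else .node (CT (l.take (minidx0 l))) (CT (l.drop (minidx0 l + 1)))
termination_by l.length
decreasing_by
  · have := minidx0_lt_length h
    simp [List.length_take]
    omega
  · have : 0 < l.length := List.length_pos_iff.mpr h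
    simp [List.length_drop]
    omega

/-- The value of the 1-based position `i` of the string `T` (default `0`). -/
def val (T : List ℤ) (i : ℕ) : ℤ := T.getD (i - 1) 0

/-- `IsSubSeq n m I` : `I` is a strictly increasing sequence of `m` subscripts in `[1, n]`. -/
def IsSubSeq (n m : ℕ) (I : List ℕ) : Prop :=
  I.length = m ∧ I.Pairwise (· < ·) ∧ ∀ j ∈ I, 1 ≤ j ∧ j ≤ n

/-- The subsequence `T_I` of `T` selected by the (1-based) subscript sequence `I`. -/
def seqAt (T : List ℤ) (I : List ℕ) : List ℤ := I.map (val T)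

/-- The substring `P[a..b]` of `P` (1-based, inclusive). -/
def subslice (P : List ℤ) (a b : ℕ) : List ℤ := (P.take b).drop (a - 1)

/-- The left end of the maximal interval around position `v` in which `P[v]` is minimal:
one plus the rightmost position `j < v` carrying a value smaller than `P[v]` (or `1`). -/
def leftEnd (P : List ℤ) (v : ℕ) : ℕ :=
  (((Finset.Icc 1 (v - 1)).filter (fun j => val P j < val P v)).max.unbotD 0) + 1

/-- The right end of the maximal interval around position `v` in which `P[v]` is minimal:
the leftmost position `j > v` carrying a value smaller than `P[v]`, minus one (or `|P|`). -/
def rightEnd (P : List ℤ) (v : ℕ) : ℕ :=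
  (((Finset.Icc (v + 1) P.length).filter (fun j => val P j < val P v)).min.untopD
    (P.length + 1)) - 1

/-- `P_v`: the substring of `P` spanned by the subtree of `CT(P)` rooted at node `v`
(nodes are identified with 1-based positions of `P`). -/
def Psub (P : List ℤ) (v : ℕ) : List ℤ := subslice P (leftEnd P v) (rightEnd P v)

/-- The left child `v.L` of node `v` in `CT(P)` (as a 1-based position), if it exists. -/
noncomputable def leftChild (P : List ℤ) (v : ℕ) : Option ℕ :=
  if leftEnd P v < v then some (leftEnd P v + minidx0 (subslice P (leftEnd P v) (v - 1)))
  else none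

/-- The right child `v.R` of node `v` in `CT(P)` (as a 1-based position), if it exists. -/
noncomputable def rightChild (P : List ℤ) (v : ℕ) : Option ℕ :=
  if v < rightEnd P v then some (v + 1 + minidx0 (subslice P (v + 1) (rightEnd P v)))
  else none

/-- `[ℓ, r]` is a fixed-interval with pivot `(v, i)`. -/
def IsFixedInterval (T P : List ℤ) (v i ℓ r : ℕ) : Prop :=
  1 ≤ ℓ ∧ r ≤ T.length ∧
    ∃ I : List ℕ, IsSubSeq T.length (Psub P v).length I ∧ i ∈ I ∧
      (∀ j ∈ I, ℓ ≤ j ∧ j ≤ r) ∧ CT (seqAt T I) = CT (Psub P v) ∧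
      val T i = minval (seqAt T I)

/-- `IntervalSsubset (ℓ', r') (ℓ, r)` : the interval `[ℓ', r']` is strictly contained
in the interval `[ℓ, r]`. -/
def IntervalSsubset (p q : ℕ × ℕ) : Prop := q.1 ≤ p.1 ∧ p.2 ≤ q.2 ∧ p ≠ q

/-- `[ℓ, r]` is a minimal fixed-interval with pivot `(v, i)`. -/
def IsMinFixedInterval (T P : List ℤ) (v i ℓ r : ℕ) : Prop :=
  IsFixedInterval T P v i ℓ r ∧
    ¬∃ ℓ' r', IsFixedInterval T P v i ℓ' r' ∧ IntervalSsubset (ℓ', r') (ℓ, r)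

open Classical in
/-- The left endpoint `L(v, i)` of the minimal fixed-interval `mfi(v, i)`,
which is `-∞` (i.e. `⊥`) if no (minimal) fixed-interval with pivot `(v, i)` exists. -/
noncomputable def mfiL (T P : List ℤ) (v i : ℕ) : WithBot ℕ :=
  if h : ∃ ℓ r, IsMinFixedInterval T P v i ℓ r then (h.choose : WithBot ℕ) else ⊥

open Classical in
/-- The right endpoint `R(v, i)` of the minimal fixed-interval `mfi(v, i)`,
which is `∞` (i.e. `⊤`) if no (minimal) fixed-interval with pivot `(v, i)` exists. -/
noncomputable def mfiR (T P : List ℤ) (v i : ℕ) : WithTop ℕ :=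
  if h : ∃ ℓ r, IsMinFixedInterval T P v i ℓ r then (h.choose_spec.choose : WithTop ℕ) else ⊤

/-- `I` is a trace of pattern `P` in text `T`. -/
def IsTrace (T P : List ℤ) (I : List ℕ) : Prop :=
  IsSubSeq T.length P.length I ∧ CT (seqAt T I) = CT P

/-- `[ℓ, r]` is an occurrence interval for `P` over `T`. -/
def IsOccInterval (T P : List ℤ) (ℓ r : ℕ) : Prop :=
  1 ≤ ℓ ∧ r ≤ T.length ∧ ∃ I, IsTrace T P I ∧ ∀ j ∈ I, ℓ ≤ j ∧ j ≤ r

/-- `[ℓ, r]` is a minimal occurrence interval for `P` over `T`. -/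
def IsMinOccInterval (T P : List ℤ) (ℓ r : ℕ) : Prop :=
  IsOccInterval T P ℓ r ∧
    ¬∃ ℓ' r', IsOccInterval T P ℓ' r' ∧ IntervalSsubset (ℓ', r') (ℓ, r)

/-! The subscripts of a trace whose minimum sits at the pivot `i` split as `s ++ i :: t`, with
`s` left of `i` spelling the left subtree of the pattern's Cartesian tree and `t` right of `i`
spelling the right subtree. So the left half of one such trace can be spliced with the right
half of another: fixed-intervals with a common pivot are closed under intersection, and two
minimal ones both coincide with their intersection. -/

def BTree.size : BTree → ℕ
  | .nil => 0
  | .node l r => l.size + r.size + 1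

theorem size_CT (l : List ℤ) : (CT l).size = l.length := by
  by_cases h : l = []
  · subst h
    rw [CT]
    rfl
  · have hk := minidx0_lt_length h
    rw [CT, dif_neg h, BTree.size, size_CT, size_CT, List.length_take, List.length_drop]
    omega
termination_by l.length
decreasing_by
  · have := minidx0_lt_length h
    simp only [List.length_take]
    omega
  · have : 0 < l.length := List.length_pos_iff.mpr h
    simp only [List.length_drop]
    omega

theorem length_eq_of_CT_eq {l l' : List ℤ} (h : CT l = CT l') : l.length = l'.length := by
  rw [← size_CT, ← size_CT, h]

theorem minval_le_of_mem {l : List ℤ} {x : ℤ} (hx : x ∈ l) : minval l ≤ x := by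
  obtain ⟨a, ha⟩ :=
    WithTop.ne_top_iff_exists.mp (List.minimum_ne_top_of_ne_nil (List.ne_nil_of_mem hx))
  have hle := List.minimum_le_of_mem' hx
  rw [← ha] at hle
  rw [minval, ← ha]
  exact_mod_cast hle

theorem minval_append_cons {A B : List ℤ} {m : ℤ} (hA : ∀ x ∈ A, m < x) (hB : ∀ x ∈ B, m < x) :
    minval (A ++ m :: B) = m := by
  have hmin : (A ++ m :: B).minimum = m := by
    refine List.minimum_eq_coe_iff.mpr ⟨List.mem_append_cons_self, fun a ha => ?_⟩
    rcases List.mem_append.mp ha with ha | ha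
    · exact (hA a ha).le
    rcases List.mem_cons.mp ha with rfl | ha
    · exact le_rfl
    · exact (hB a ha).le
  rw [minval, hmin]
  rfl

theorem minidx0_append_cons {A B : List ℤ} {m : ℤ} (hA : ∀ x ∈ A, m < x)
    (hB : ∀ x ∈ B, m < x) : minidx0 (A ++ m :: B) = A.length := by
  have hmA : m ∉ A := fun h => (hA m h).false
  rw [minidx0, minval_append_cons hA hB, List.idxOf_append_of_notMem hmA, List.idxOf_cons_self]
  rfl

theorem CT_append_cons {A B : List ℤ} {m : ℤ} (hA : ∀ x ∈ A, m < x) (hB : ∀ x ∈ B, m < x) :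
    CT (A ++ m :: B) = .node (CT A) (CT B) := by
  rw [CT, dif_neg (by simp), minidx0_append_cons hA hB, List.take_left,
    List.drop_length_add_append, List.drop_one, List.tail_cons]

theorem val_injOn {T : List ℤ} (hT : T.Nodup) : Set.InjOn (val T) (Set.Icc 1 T.length) := by
  intro a ⟨ha1, ha2⟩ b ⟨hb1, hb2⟩ h
  rw [val, val, List.getD_eq_getElem _ _ (by omega), List.getD_eq_getElem _ _ (by omega)] at h
  have := (hT.getElem_inj_iff).mp h
  omega

theorem seqAt_append_cons (T : List ℤ) (s t : List ℕ) (i : ℕ) :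
    seqAt T (s ++ i :: t) = seqAt T s ++ val T i :: seqAt T t := by
  simp [seqAt]

def IsTraceMinAt (T Q : List ℤ) (I : List ℕ) (i : ℕ) : Prop :=
  IsTrace T Q I ∧ i ∈ I ∧ val T i = minval (seqAt T I)

section IsTraceMinAt

variable {T Q : List ℤ} {I J : List ℕ} {i : ℕ}

theorem IsTraceMinAt.exists_eq_append_cons (hT : T.Nodup) (h : IsTraceMinAt T Q I i) :
    ∃ s t, I = s ++ i :: t ∧ (∀ x ∈ s, x < i ∧ val T i < val T x) ∧
      (∀ x ∈ t, i < x ∧ val T i < val T x) := by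
  obtain ⟨⟨⟨-, hsorted, hbd⟩, -⟩, hiI, hmin⟩ := h
  have hlt : ∀ x ∈ I, x ≠ i → val T i < val T x := by
    intro x hx hne
    refine lt_of_le_of_ne (hmin ▸ minval_le_of_mem (List.mem_map_of_mem hx)) fun heq => hne ?_
    exact val_injOn hT (hbd i hiI) (hbd x hx) heq |>.symm
  obtain ⟨s, t, rfl⟩ := List.append_of_mem hiI
  obtain ⟨-, hsorted_t, hcross⟩ := List.pairwise_append.mp hsorted
  have hs : ∀ x ∈ s, x < i := fun x hx => hcross x hx i List.mem_cons_self
  have ht : ∀ x ∈ t, i < x := (List.pairwise_cons.mp hsorted_t).1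
  refine ⟨s, t, rfl, fun x hx => ⟨hs x hx, hlt x (by simp [hx]) (hs x hx).ne⟩,
    fun x hx => ⟨ht x hx, hlt x (by simp [hx]) (ht x hx).ne'⟩⟩

theorem IsTraceMinAt.CT_eq_node (h : IsTraceMinAt T Q I i) {s t : List ℕ}
    (hI : I = s ++ i :: t) (hs : ∀ x ∈ s, val T i < val T x) (ht : ∀ x ∈ t, val T i < val T x) :
    CT Q = .node (CT (seqAt T s)) (CT (seqAt T t)) := by
  have hs' : ∀ y ∈ seqAt T s, val T i < y := by simpa [seqAt] using hs
  have ht' : ∀ y ∈ seqAt T t, val T i < y := by simpa [seqAt] using ht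
  rw [← h.1.2, hI, seqAt_append_cons, CT_append_cons hs' ht']

theorem IsTraceMinAt.splice (hT : T.Nodup) (hI : IsTraceMinAt T Q I i)
    (hJ : IsTraceMinAt T Q J i) :
    ∃ K, IsTraceMinAt T Q K i ∧ ∀ j ∈ K, (j ∈ J ∧ j ≤ i) ∨ (j ∈ I ∧ i ≤ j) := by
  obtain ⟨s, t, rfl, hs, ht⟩ := hI.exists_eq_append_cons hT
  obtain ⟨s', t', rfl, hs', ht'⟩ := hJ.exists_eq_append_cons hT
  have ⟨⟨_, hsortI, hbdI⟩, _⟩ := hI.1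
  have ⟨⟨_, hsortJ, hbdJ⟩, _⟩ := hJ.1
  have hs'' : ∀ y ∈ seqAt T s', val T i < y := by simpa [seqAt] using fun x hx => (hs' x hx).2
  have ht'' : ∀ y ∈ seqAt T t, val T i < y := by simpa [seqAt] using fun x hx => (ht x hx).2
  have hsplit : ∀ j ∈ s' ++ i :: t, (j ∈ s' ++ i :: t' ∧ j ≤ i) ∨ (j ∈ s ++ i :: t ∧ i ≤ j) := by
    intro j hj
    rcases List.mem_append.mp hj with hj | hj
    · exact .inl ⟨by simp [hj], (hs' j hj).1.le⟩
    rcases List.mem_cons.mp hj with rfl | hj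
    · exact .inr ⟨by simp, le_rfl⟩
    · exact .inr ⟨by simp [hj], (ht j hj).1.le⟩
  have hCT : CT (seqAt T (s' ++ i :: t)) = CT Q := by
    have hQ := hI.CT_eq_node rfl (fun x hx => (hs x hx).2) (fun x hx => (ht x hx).2)
    have hQ' := hJ.CT_eq_node rfl (fun x hx => (hs' x hx).2) (fun x hx => (ht' x hx).2)
    rw [seqAt_append_cons, CT_append_cons hs'' ht'', (BTree.node.inj (hQ'.symm.trans hQ)).1, hQ]
  have hsorted : (s' ++ i :: t).Pairwise (· < ·) := by
    refine List.pairwise_append.mpr ⟨(List.pairwise_append.mp hsortJ).1,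
      (List.pairwise_append.mp hsortI).2.1, fun a ha b hb => ?_⟩
    rcases List.mem_cons.mp hb with rfl | hb
    · exact (hs' a ha).1
    · exact (hs' a ha).1.trans (ht b hb).1
  have hbd : ∀ j ∈ s' ++ i :: t, 1 ≤ j ∧ j ≤ T.length := fun j hj => by
    rcases hsplit j hj with ⟨hj, -⟩ | ⟨hj, -⟩
    exacts [hbdJ j hj, hbdI j hj]
  refine ⟨s' ++ i :: t, ⟨⟨⟨?_, hsorted, hbd⟩, hCT⟩, by simp, ?_⟩, hsplit⟩
  · simpa [seqAt] using length_eq_of_CT_eq hCT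
  · rw [seqAt_append_cons, minval_append_cons hs'' ht'']

end IsTraceMinAt

section FixedInterval

variable {T P : List ℤ} {v i ℓ r ℓ' r' : ℕ}

theorem IsFixedInterval.splice (hT : T.Nodup) (h : IsFixedInterval T P v i ℓ r)
    (h' : IsFixedInterval T P v i ℓ' r') : IsFixedInterval T P v i ℓ' r := by
  obtain ⟨-, hr, I, hsub, hiI, hbd, hCT, hmin⟩ := h
  obtain ⟨hℓ', -, J, hsub', hiJ, hbd', hCT', hmin'⟩ := h'
  obtain ⟨K, ⟨⟨hsubK, hCTK⟩, hiK, hminK⟩, hK⟩ :=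
    IsTraceMinAt.splice hT ⟨⟨hsub, hCT⟩, hiI, hmin⟩ ⟨⟨hsub', hCT'⟩, hiJ, hmin'⟩
  refine ⟨hℓ', hr, K, hsubK, hiK, fun j hj => ?_, hCTK, hminK⟩
  have := hbd i hiI
  have := hbd' i hiJ
  rcases hK j hj with ⟨hjJ, hji⟩ | ⟨hjI, hij⟩
  · exact ⟨(hbd' j hjJ).1, by omega⟩
  · exact ⟨by omega, (hbd j hjI).2⟩

theorem IsFixedInterval.inter (hT : T.Nodup) (h : IsFixedInterval T P v i ℓ r)
    (h' : IsFixedInterval T P v i ℓ' r') :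
    IsFixedInterval T P v i (max ℓ ℓ') (min r r') := by
  rcases le_total ℓ ℓ' with hℓ | hℓ <;> rcases le_total r r' with hr | hr
  · rw [max_eq_right hℓ, min_eq_left hr]
    exact h.splice hT h'
  · rw [max_eq_right hℓ, min_eq_right hr]
    exact h'
  · rw [max_eq_left hℓ, min_eq_left hr]
    exact h
  · rw [max_eq_left hℓ, min_eq_right hr]
    exact h'.splice hT h

theorem IsMinFixedInterval.eq_of_le (h : IsMinFixedInterval T P v i ℓ r)
    (h' : IsFixedInterval T P v i ℓ' r') (hℓ : ℓ ≤ ℓ') (hr : r' ≤ r) : ℓ' = ℓ ∧ r' = r := by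
  by_contra hne
  exact h.2 ⟨ℓ', r', h', hℓ, hr, fun heq => hne (Prod.ext_iff.mp heq)⟩

end FixedInterval

theorem at_most_one_minimal_fixed_interval_general
    (T P : List ℤ) (hT : T.Nodup) (v i : ℕ) (ℓ r ℓ' r' : ℕ)
    (h1 : IsMinFixedInterval T P v i ℓ r) (h2 : IsMinFixedInterval T P v i ℓ' r') :
    ℓ = ℓ' ∧ r = r' := by
  have hinter := h1.1.inter hT h2.1
  obtain ⟨hℓ, hr⟩ := h1.eq_of_le hinter (le_max_left _ _) (min_le_left _ _)
  obtain ⟨hℓ', hr'⟩ := h2.eq_of_le hinter (le_max_right _ _) (min_le_right _ _)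
  exact ⟨hℓ.symm.trans hℓ', hr.symm.trans hr'⟩

/-- For every pivot `(v, i) ∈ [1,m] × [1,n]`, there exists at most one
minimal fixed-interval with pivot `(v, i)`. -/
theorem at_most_one_minimal_fixed_interval
    (T P : List ℤ) (hT : T.Nodup) (hP : P.Nodup)
    (hm : 1 ≤ P.length) (hmn : P.length ≤ T.length)
    (v i : ℕ) (hv : 1 ≤ v ∧ v ≤ P.length) (hi : 1 ≤ i ∧ i ≤ T.length)
    (ℓ r ℓ' r' : ℕ)
    (h1 : IsMinFixedInterval T P v i ℓ r) (h2 : IsMinFixedInterval T P v i ℓ' r') :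
    ℓ = ℓ' ∧ r = r' :=
  at_most_one_minimal_fixed_interval_general T P hT v i ℓ r ℓ' r' h1 h2
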